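/- arXiv:cs/0511061 — 5 statements merged into one kernel-verified Lean document; each statement's English description precedes it below -/
import Mathlib

section
/- Let A = (Q, q₀, δ, F) be a (co-Büchi) linear weak alternating automaton. Then L(A) ≠ ∅ if and only if there exist a finite sequence s₀ … s_n of states (s_i ⊆ V), a finite run dag Δ = e₀ … e_n of A over s₀ … s_n with configurations c₀ … c_{n+1}, and some k ≤ n such that (1) c_k = c_{n+1}, and (2) for every q ∈ F there is some j with k ≤ j ≤ n and (q, q) ∉ e_j. -/
/-- Transition formulas over atomic propositions `V` and locations `Q`:
propositional formulas built from `true`, `false`, literals `v` / `¬v`,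
atoms `q ∈ Q` (occurring only positively), conjunction and disjunction. -/
inductive TransForm (V Q : Type) : Type where
  | tt : TransForm V Q
  | ff : TransForm V Q
  | pos : V → TransForm V Q
  | neg : V → TransForm V Q
  | atom : Q → TransForm V Q
  | and : TransForm V Q → TransForm V Q → TransForm V Q
  | or : TransForm V Q → TransForm V Q → TransForm V Q

/-- Satisfaction of a transition formula by a pair `(s, X)` with `s ⊆ V`, `X ⊆ Q`. -/
def TransForm.sat {V Q : Type} (s : Set V) (X : Set Q) : TransForm V Q → Prop
  | .tt => True
  | .ff => False
  | .pos v => v ∈ s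
  | .neg v => v ∉ s
  | .atom q => q ∈ X
  | .and f g => f.sat s X ∧ g.sat s X
  | .or f g => f.sat s X ∨ g.sat s X

/-- `f.occurs q` holds iff location `q` occurs in the transition formula `f`. -/
def TransForm.occurs {V Q : Type} (q : Q) : TransForm V Q → Prop
  | .atom q' => q' = q
  | .and f g => f.occurs q ∨ g.occurs q
  | .or f g => f.occurs q ∨ g.occurs q
  | _ => False

/-- A (co-Büchi) linear weak alternating automaton over propositions `V` and
locations `Q`: initial location, transition function, co-final set `F`, and the
requirement that `q' ⪯ q ↔ q →* q'` is a partial order (reflexivity and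
transitivity are automatic; antisymmetry is the actual condition). -/
structure LWAA (V Q : Type) where
  init : Q
  delta : Q → TransForm V Q
  final : Set Q
  antisymm : ∀ q q' : Q,
    Relation.ReflTransGen (fun a b => (delta a).occurs b) q q' →
    Relation.ReflTransGen (fun a b => (delta a).occurs b) q' q → q = q'

namespace LWAA

variable {V Q : Type}

/-- The configurations `c₀ c₁ …` determined by a sequence of edge sets:
`c₀ = {q₀}` and `c_{i+1} = e_i(c_i)`. -/
def configs (A : LWAA V Q) (e : ℕ → Set (Q × Q)) : ℕ → Set Q
  | 0 => {A.init}
  | i + 1 => {q' | ∃ q ∈ A.configs e i, (q, q') ∈ e i}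

/-- `Δ = e₀e₁…` is a run dag of `A` over the temporal structure `σ`. -/
def IsRunDag (A : LWAA V Q) (σ : ℕ → Set V) (e : ℕ → Set (Q × Q)) : Prop :=
  ∀ i : ℕ,
    (∀ p ∈ e i, p.1 ∈ A.configs e i) ∧
    (∀ p ∈ e i, (A.delta p.1).occurs p.2) ∧
    (∀ q ∈ A.configs e i, (A.delta q).sat (σ i) {q' | (q, q') ∈ e i})

/-- `e₀ … e_n` is a finite run dag of `A` over the finite sequence of states
`s₀ … s_n` (only the values for indices `≤ n` are relevant). -/
def IsFinRunDag (A : LWAA V Q) (s : ℕ → Set V) (e : ℕ → Set (Q × Q)) (n : ℕ) : Prop :=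
  ∀ i ≤ n,
    (∀ p ∈ e i, p.1 ∈ A.configs e i) ∧
    (∀ p ∈ e i, (A.delta p.1).occurs p.2) ∧
    (∀ q ∈ A.configs e i, (A.delta q).sat (s i) {q' | (q, q') ∈ e i})

/-- A path of the run dag given by the edges `e`. -/
def IsPath (A : LWAA V Q) (e : ℕ → Set (Q × Q)) (p : ℕ → Q) : Prop :=
  p 0 = A.init ∧ ∀ i : ℕ, (p i, p (i + 1)) ∈ e i

/-- Co-Büchi acceptance: every path visits `F` only finitely often. -/
def Accepting (A : LWAA V Q) (e : ℕ → Set (Q × Q)) : Prop :=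
  ∀ p : ℕ → Q, A.IsPath e p → {i : ℕ | p i ∈ A.final}.Finite

/-- The language of `A`: temporal structures admitting an accepting run dag. -/
def Lang (A : LWAA V Q) : Set (ℕ → Set V) :=
  {σ | ∃ e : ℕ → Set (Q × Q), A.IsRunDag σ e ∧ A.Accepting e}

/-- An LWAA is simple if whenever a co-final location `q` can be activated
from `q'` while being exited in the same transition, `q'` has an alternative
transition avoiding `q`. -/
def Simple (A : LWAA V Q) : Prop :=
  ∀ q ∈ A.final, ∀ q' : Q, ∀ s : Set V, ∀ X Y : Set Q,
    q ∉ X → q ∉ Y →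
    (A.delta q').sat s (X ∪ {q}) → (A.delta q).sat s Y →
    (A.delta q').sat s (X ∪ Y)

end LWAA

/-! ### Auxiliary material for the non-emptiness criterion -/

namespace LWAA

open Relation

variable {V Q : Type}

/-- The one-step successor relation `q → q'`. -/
abbrev step (A : LWAA V Q) (a b : Q) : Prop := (A.delta a).occurs b

lemma configs_succ (A : LWAA V Q) (e : ℕ → Set (Q × Q)) (i : ℕ) :
    A.configs e (i + 1) = {q' | ∃ q ∈ A.configs e i, (q, q') ∈ e i} := rfl

/-- Every member of a configuration is reached by a finite path from the
initial location. -/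
lemma exists_finpath (A : LWAA V Q) (e : ℕ → Set (Q × Q)) :
    ∀ i, ∀ q ∈ A.configs e i,
      ∃ p : ℕ → Q, p 0 = A.init ∧ (∀ j, j < i → (p j, p (j + 1)) ∈ e j) ∧ p i = q := by
  intro i
  induction i with
  | zero =>
      intro q hq
      exact ⟨fun _ => A.init, rfl, fun j hj => absurd hj (Nat.not_lt_zero j), hq.symm⟩
  | succ i ih =>
      intro q hq
      obtain ⟨q', hq', he⟩ := hq
      obtain ⟨p, hp0, hpe, hpi⟩ := ih q' hq'
      refine ⟨fun j => if j ≤ i then p j else q, ?_, ?_, ?_⟩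
      · simpa using hp0
      · intro j hj
        by_cases h1 : j + 1 ≤ i
        · have h2 : j ≤ i := by omega
          simp only [if_pos h1, if_pos h2]
          exact hpe j (by omega)
        · have h2 : j = i := by omega
          subst h2
          simp only [if_pos (le_refl j), if_neg (by omega : ¬ j + 1 ≤ j)]
          rw [hpi]; exact he
      · simp only [if_neg (by omega : ¬ i + 1 ≤ i)]

/-- Along an accepting run dag, no co-final location keeps a self-loop from
some point on. -/
lemma unbounded_noloop (A : LWAA V Q) {σ : ℕ → Set V} {e : ℕ → Set (Q × Q)}
    (hrun : A.IsRunDag σ e) (hacc : A.Accepting e)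
    {q : Q} (hq : q ∈ A.final) (m : ℕ) : ∃ j, m ≤ j ∧ (q, q) ∉ e j := by
  by_contra hcon
  push_neg at hcon
  have hqc : q ∈ A.configs e m := (hrun m).1 (q, q) (hcon m le_rfl)
  obtain ⟨p, hp0, hpe, hpm⟩ := A.exists_finpath e m q hqc
  have hpath : A.IsPath e (fun j => if j ≤ m then p j else q) := by
    constructor
    · simpa using hp0
    · intro j
      by_cases h1 : j + 1 ≤ m
      · have h2 : j ≤ m := by omega
        simp only [if_pos h1, if_pos h2]
        exact hpe j (by omega)
      · by_cases h2 : j ≤ m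
        · have h3 : j = m := by omega
          subst h3
          simp only [if_pos (le_refl j), if_neg h1]
          rw [hpm]; exact hcon j le_rfl
        · simp only [if_neg h1, if_neg h2]
          exact hcon j (by omega)
  have hfin := hacc _ hpath
  have hsub : Set.Ici (m + 1) ⊆ {i : ℕ | (if i ≤ m then p i else q) ∈ A.final} := by
    intro i hi
    have : ¬ i ≤ m := by exact Nat.not_le.mpr hi
    simp only [Set.mem_setOf_eq, if_neg this]
    exact hq
  exact ((Set.Ici_infinite (m + 1)).mono hsub) hfin

lemma path_reach (A : LWAA V Q) {p : ℕ → Q}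
    (h : ∀ i, ReflTransGen A.step (p i) (p (i + 1))) :
    ∀ i j, i ≤ j → ReflTransGen A.step (p i) (p j) := by
  intro i j hij
  induction j, hij using Nat.le_induction with
  | base => exact .refl
  | succ j _ ih => exact ih.trans (h j)

/-- In an LWAA, every infinite path is eventually constant. -/
lemma eventually_const [Finite Q] (A : LWAA V Q) {p : ℕ → Q}
    (h : ∀ i, ReflTransGen A.step (p i) (p (i + 1))) :
    ∃ m, ∀ j, m ≤ j → p j = p m := by
  obtain ⟨q, hq⟩ := Finite.exists_infinite_fiber p
  have hq' : (p ⁻¹' {q}).Infinite := Set.infinite_coe_iff.mp hq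
  obtain ⟨m, hm⟩ := hq'.nonempty
  have hmq : p m = q := hm
  refine ⟨m, fun j hj => ?_⟩
  obtain ⟨m', hm', hjm'⟩ := hq'.exists_gt j
  have hm'q : p m' = q := hm'
  have h1 : ReflTransGen A.step (p m) (p j) := A.path_reach h m j hj
  have h2 : ReflTransGen A.step (p j) (p m) := by
    have h3 := A.path_reach h j m' hjm'.le
    rwa [hm'q, ← hmq] at h3
  exact A.antisymm _ _ h2 h1

/-- Configurations of an edge sequence reindexed by `f`. -/
lemma configs_comp (A : LWAA V Q) (e : ℕ → Set (Q × Q)) (f : ℕ → ℕ)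
    (h0 : f 0 = 0)
    (hstep : ∀ i, A.configs e (f i + 1) = A.configs e (f (i + 1))) :
    ∀ i, A.configs (fun j => e (f j)) i = A.configs e (f i) := by
  intro i
  induction i with
  | zero => rw [h0]; rfl
  | succ i ih =>
      have h1 : A.configs (fun j => e (f j)) (i + 1)
          = {q' | ∃ qq ∈ A.configs e (f i), (qq, q') ∈ e (f i)} := by
        rw [configs_succ, ih]
      rw [h1, ← hstep i, configs_succ]

end LWAA

/-- Periodic wrapping of indices: identity up to `n`, then looping through
`[k, n]` with period `n + 1 - k`. -/
def pwrap (k n i : ℕ) : ℕ := if i < k then i else k + (i - k) % (n + 1 - k)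

lemma pwrap_id {k n : ℕ} (hk : k ≤ n) {i : ℕ} (hi : i ≤ n) : pwrap k n i = i := by
  unfold pwrap
  split
  · rfl
  · have h1 : k ≤ i := by omega
    have h2 : i - k < n + 1 - k := by omega
    rw [Nat.mod_eq_of_lt h2]
    omega

lemma pwrap_le {k n : ℕ} (hk : k ≤ n) (i : ℕ) : pwrap k n i ≤ n := by
  unfold pwrap
  split
  · omega
  · have h2 : (i - k) % (n + 1 - k) < n + 1 - k := Nat.mod_lt _ (by omega)
    omega

lemma pwrap_succ {k n : ℕ} (hk : k ≤ n) (i : ℕ) :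
    pwrap k n (i + 1) = pwrap k n i + 1 ∨
      (pwrap k n i = n ∧ pwrap k n (i + 1) = k) := by
  set L := n + 1 - k with hL
  by_cases hik : i < k
  · left
    rw [pwrap_id hk (by omega), pwrap_id hk (by omega)]
  · have hki : k ≤ i := by omega
    have hLpos : 0 < L := by omega
    set r := (i - k) % L with hr
    have hrlt : r < L := Nat.mod_lt _ hLpos
    have hdm : L * ((i - k) / L) + (i - k) % L = i - k := Nat.div_add_mod _ _
    have hkey : (i + 1 - k) % L = (r + 1) % L := by
      have h1 : i + 1 - k = i - k + 1 := by omega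
      have h2 : i - k + 1 = L * ((i - k) / L) + (r + 1) := by
        rw [← Nat.add_assoc, hdm]
      rw [h1, h2, Nat.mul_add_mod]
    have hw : pwrap k n (i + 1) = k + (r + 1) % L := by
      unfold pwrap
      rw [if_neg (by omega : ¬ i + 1 < k), hkey]
    have hwi : pwrap k n i = k + r := by
      unfold pwrap
      rw [if_neg (by omega : ¬ i < k)]
    by_cases hcase : r + 1 < L
    · left
      rw [hw, hwi, Nat.mod_eq_of_lt hcase]; omega
    · right
      have hrL : r + 1 = L := by omega
      constructor
      · rw [hwi]; omega
      · rw [hw, hrL, Nat.mod_self]; omega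

lemma pwrap_unbounded {k n j0 : ℕ} (hk : k ≤ n) (hj0k : k ≤ j0) (hj0n : j0 ≤ n) (m : ℕ) :
    ∃ j, m ≤ j ∧ pwrap k n j = j0 := by
  set L := n + 1 - k with hL
  have hLpos : 0 < L := by omega
  refine ⟨j0 + (m + 1) * L, ?_, ?_⟩
  · have h1 : m + 1 ≤ (m + 1) * L := Nat.le_mul_of_pos_right _ hLpos
    calc m ≤ m + 1 := Nat.le_succ m
      _ ≤ (m + 1) * L := h1
      _ ≤ j0 + (m + 1) * L := Nat.le_add_left _ _
  · unfold pwrap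
    rw [if_neg (by exact Nat.not_lt.mpr (hj0k.trans (Nat.le_add_right _ _)))]
    rw [Nat.sub_add_comm hj0k, Nat.add_mul_mod_self_right,
      Nat.mod_eq_of_lt (by omega : j0 - k < L)]
    omega

/-- **Theorem 1 (non-emptiness criterion for LWAA).**
`L(A) ≠ ∅` iff there are a finite sequence of states `s₀ … s_n`, a finite run
dag `e₀ … e_n` of `A` over it with configurations `c₀ … c_{n+1}`, and `k ≤ n`
such that (1) `c_k = c_{n+1}` and (2) for every `q ∈ F` there is `k ≤ j ≤ n`
with `(q, q) ∉ e j`. -/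
theorem lwaa_lang_nonempty_iff {V Q : Type} [Fintype V] [Fintype Q] (A : LWAA V Q) :
    A.Lang.Nonempty ↔
      ∃ (n : ℕ) (s : ℕ → Set V) (e : ℕ → Set (Q × Q)) (k : ℕ),
        A.IsFinRunDag s e n ∧ k ≤ n ∧
        A.configs e k = A.configs e (n + 1) ∧
        (∀ q ∈ A.final, ∃ j : ℕ, k ≤ j ∧ j ≤ n ∧ (q, q) ∉ e j) := by
  constructor
  · rintro ⟨σ, e, hrun, hacc⟩
    obtain ⟨c, hc⟩ := Finite.exists_infinite_fiber (A.configs e)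
    have hc' : ((A.configs e) ⁻¹' {c}).Infinite := Set.infinite_coe_iff.mp hc
    obtain ⟨k, hk⟩ := hc'.nonempty
    have hkc : A.configs e k = c := hk
    have hsel : ∀ q : Q, ∃ j, k ≤ j ∧ (q ∈ A.final → (q, q) ∉ e j) := by
      intro q
      by_cases hq : q ∈ A.final
      · obtain ⟨j, h1, h2⟩ := A.unbounded_noloop hrun hacc hq k
        exact ⟨j, h1, fun _ => h2⟩
      · exact ⟨k, le_rfl, fun h => absurd h hq⟩
    choose g hg1 hg2 using hsel
    obtain ⟨m, hmc, hmlt⟩ := hc'.exists_gt (Finset.univ.sup g ⊔ k)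
    have hmc' : A.configs e m = c := hmc
    have hkM : k ≤ Finset.univ.sup g ⊔ k := le_sup_right
    refine ⟨m - 1, σ, e, k, fun i _ => hrun i, by omega, ?_, ?_⟩
    · rw [(by omega : m - 1 + 1 = m), hkc, hmc']
    · intro q hq
      have hgM : g q ≤ Finset.univ.sup g ⊔ k :=
        le_trans (Finset.le_sup (Finset.mem_univ q)) le_sup_left
      exact ⟨g q, hg1 q, by omega, hg2 q hq⟩
  · rintro ⟨n, s, e, k, hfin, hk, hcfg, hF⟩
    have hstep' : ∀ i, A.configs e (pwrap k n i + 1) = A.configs e (pwrap k n (i + 1)) := by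
      intro i
      rcases pwrap_succ hk i with h | ⟨ha, hb⟩
      · rw [h]
      · rw [ha, hb]; exact hcfg.symm
    have hconf := A.configs_comp e (pwrap k n) (pwrap_id hk (Nat.zero_le n)) hstep'
    refine ⟨fun i => s (pwrap k n i), fun i => e (pwrap k n i), ?_, ?_⟩
    · intro i
      obtain ⟨h1, h2, h3⟩ := hfin (pwrap k n i) (pwrap_le hk i)
      refine ⟨?_, h2, ?_⟩
      · intro p hp
        rw [hconf i]
        exact h1 p hp
      · intro q hq
        rw [hconf i] at hq
        exact h3 q hq
    · intro p hpath
      have hRT : ∀ i, Relation.ReflTransGen A.step (p i) (p (i + 1)) := by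
        intro i
        exact Relation.ReflTransGen.single
          ((hfin (pwrap k n i) (pwrap_le hk i)).2.1 _ (hpath.2 i))
      obtain ⟨m, hm⟩ := A.eventually_const hRT
      by_cases hqF : p m ∈ A.final
      · exfalso
        obtain ⟨j0, hj0k, hj0n, hj0⟩ := hF (p m) hqF
        obtain ⟨j, hjm, hjw⟩ := pwrap_unbounded hk hj0k hj0n m
        have hmem : (p j, p (j + 1)) ∈ e (pwrap k n j) := hpath.2 j
        rw [hjw, hm j hjm, hm (j + 1) (by omega)] at hmem
        exact hj0 hmem
      · apply Set.Finite.subset (Set.finite_Iio m)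
        intro i hi
        simp only [Set.mem_setOf_eq] at hi
        by_contra hlt
        have hmi : m ≤ i := Nat.not_lt.mp (fun h => hlt h)
        rw [hm i hmi] at hi
        exact hqF hi
end

section
/- Let A = (Q, q₀, δ, F) be a (co-Büchi) linear weak alternating automaton, let Δ = e₀ … e_n be a finite run dag of A over a finite sequence of states s₀ … s_n with configurations c₀ … c_{n+1}, and let k ≤ n be such that c_k = c_{n+1} and for every q ∈ F there is some j with k ≤ j ≤ n and (q, q) ∉ e_j. Then the infinite sequence Δ' = e₀ … e_{k−1} (e_k … e_n)^ω is an accepting run dag of A over the ultimately periodic temporal structure σ = s₀ … s_{k−1} (s_k … s_n)^ω; in particular σ ∈ L(A), so L(A) ≠ ∅. -/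
/-- The ultimately periodic extension `f₀ … f_{k-1} (f_k … f_n)^ω`
of a finite sequence `f₀ … f_n` with loop from position `k`. -/
def loopExt {α : Type} (k n : ℕ) (f : ℕ → α) (i : ℕ) : α :=
  if i ≤ n then f i else f (k + (i - k) % (n + 1 - k))

private def phi (k n i : ℕ) : ℕ := if i ≤ n then i else k + (i - k) % (n + 1 - k)

private lemma loopExt_eq {α : Type} (k n : ℕ) (f : ℕ → α) (i : ℕ) :
    loopExt k n f i = f (phi k n i) := by
  unfold loopExt phi; by_cases h : i ≤ n <;> simp [h]

private lemma phi_le {k n : ℕ} (hk : k ≤ n) (i : ℕ) : phi k n i ≤ n := by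
  unfold phi; split
  · assumption
  · have := Nat.mod_lt (i - k) (show 0 < n + 1 - k by omega); omega

private lemma phi_succ {k n : ℕ} (hk : k ≤ n) (i : ℕ) :
    phi k n (i + 1) = phi k n i + 1 ∨ (phi k n i = n ∧ phi k n (i + 1) = k) := by
  unfold phi
  rcases lt_trichotomy i n with h | h | h
  · left; rw [if_pos (show i + 1 ≤ n by omega), if_pos h.le]
  · right
    rw [if_pos h.le, if_neg (by omega)]
    refine ⟨h, ?_⟩
    have h2 : i + 1 - k = n + 1 - k := by omega
    rw [h2, Nat.mod_self]; omega
  · rw [if_neg (by omega), if_neg (by omega)]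
    set P := n + 1 - k with hP
    have hP0 : 0 < P := by omega
    have h1 : i + 1 - k = (i - k) + 1 := by omega
    rw [h1]
    have hd := Nat.div_add_mod (i - k) P
    set r := (i - k) % P with hr
    have hrP : r < P := Nat.mod_lt _ hP0
    rcases eq_or_lt_of_le (Nat.succ_le_of_lt hrP) with he | hlt
    · right
      have h2 : (i - k) + 1 = ((i - k) / P + 1) * P := by
        rw [add_mul, one_mul, mul_comm]; omega
      exact ⟨by omega, by rw [h2, Nat.mul_mod_left]; omega⟩
    · left
      have h2 : (i - k) + 1 = (r + 1) + P * ((i - k) / P) := by omega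
      rw [h2, Nat.add_mul_mod_self_left, Nat.mod_eq_of_lt hlt]; omega

private lemma phi_hits {k n j : ℕ} (hk : k ≤ n) (hj1 : k ≤ j) (hj2 : j ≤ n) (N : ℕ) :
    ∃ i, N ≤ i ∧ phi k n i = j := by
  set P := n + 1 - k with hP
  have hP0 : 0 < P := by omega
  have hle : N + n + 1 ≤ (N + n + 1) * P := Nat.le_mul_of_pos_right _ hP0
  refine ⟨j + (N + n + 1) * P, by omega, ?_⟩
  unfold phi
  rw [if_neg (by omega)]
  have h1 : j + (N + n + 1) * P - k = (j - k) + (N + n + 1) * P := by omega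
  rw [h1, Nat.add_mul_mod_self_right, Nat.mod_eq_of_lt (by omega)]
  omega

private lemma configs_loopExt {V Q : Type} (A : LWAA V Q) (e : ℕ → Set (Q × Q)) {k n : ℕ}
    (hk : k ≤ n) (hloop : A.configs e k = A.configs e (n + 1)) (i : ℕ) :
    A.configs (loopExt k n e) i = A.configs e (phi k n i) := by
  induction i with
  | zero =>
    have h0 : phi k n 0 = 0 := by unfold phi; rw [if_pos (by omega)]
    rw [h0]; rfl
  | succ i ih =>
    have he : loopExt k n e i = e (phi k n i) := loopExt_eq k n e i
    have step : A.configs (loopExt k n e) (i + 1) = A.configs e (phi k n i + 1) := by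
      show {q' | ∃ q ∈ A.configs (loopExt k n e) i, (q, q') ∈ loopExt k n e i} = _
      rw [ih, he]; rfl
    rw [step]
    rcases phi_succ hk i with h | ⟨h1, h2⟩
    · rw [h]
    · rw [h1, h2, hloop]

/-- **Theorem 1, "if" direction (explicit construction).** Given a finite run
dag `e₀ … e_n` over `s₀ … s_n` with `c_k = c_{n+1}` (`k ≤ n`) such that every
co-final location `q ∈ F` has `(q,q) ∉ e_j` for some `k ≤ j ≤ n`, the infinite
sequence `Δ' = e₀ … e_{k-1} (e_k … e_n)^ω` is an accepting run dag of `A` over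
`σ = s₀ … s_{k-1} (s_k … s_n)^ω`; in particular `σ ∈ L(A)`, so `L(A) ≠ ∅`. -/
theorem lwaa_loopExt_accepting_run {V Q : Type} [Fintype V] [Fintype Q] (A : LWAA V Q)
    (s : ℕ → Set V) (e : ℕ → Set (Q × Q)) (n k : ℕ)
    (hrun : A.IsFinRunDag s e n) (hk : k ≤ n)
    (hloop : A.configs e k = A.configs e (n + 1))
    (hF : ∀ q ∈ A.final, ∃ j : ℕ, k ≤ j ∧ j ≤ n ∧ (q, q) ∉ e j) :
    A.IsRunDag (loopExt k n s) (loopExt k n e) ∧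
    A.Accepting (loopExt k n e) ∧
    loopExt k n s ∈ A.Lang ∧ A.Lang.Nonempty := by
  have hrun' : A.IsRunDag (loopExt k n s) (loopExt k n e) := by
    intro i
    have hm : phi k n i ≤ n := phi_le hk i
    have he : loopExt k n e i = e (phi k n i) := loopExt_eq k n e i
    have hs : loopExt k n s i = s (phi k n i) := loopExt_eq k n s i
    have hc : A.configs (loopExt k n e) i = A.configs e (phi k n i) :=
      configs_loopExt A e hk hloop i
    rw [he, hs, hc]
    exact hrun (phi k n i) hm
  have hacc : A.Accepting (loopExt k n e) := by
    intro p hp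
    have hmem : ∀ i, (p i, p (i + 1)) ∈ e (phi k n i) := by
      intro i
      have := hp.2 i; rwa [loopExt_eq k n e i] at this
    have hstep : ∀ i, (A.delta (p i)).occurs (p (i + 1)) := fun i =>
      (hrun (phi k n i) (phi_le hk i)).2.1 _ (hmem i)
    have hchain : ∀ i j, i ≤ j →
        Relation.ReflTransGen (fun a b => (A.delta a).occurs b) (p i) (p j) := by
      intro i j hij
      induction j, hij using Nat.le_induction with
      | base => exact Relation.ReflTransGen.refl
      | succ j hij ih => exact ih.tail (hstep j)
    obtain ⟨q, hq⟩ := Finite.exists_infinite_fiber p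
    have hq' : (p ⁻¹' {q}).Infinite := Set.infinite_coe_iff.mp hq
    obtain ⟨i₀, hi₀mem, _⟩ := hq'.exists_gt 0
    have hi₀ : p i₀ = q := hi₀mem
    have hconst : ∀ i, i₀ ≤ i → p i = q := by
      intro i hi
      obtain ⟨j, hjmem, hj⟩ := hq'.exists_gt i
      have h1 := hchain i₀ i hi
      have h2 := hchain i j hj.le
      rw [hi₀] at h1
      rw [show p j = q from hjmem] at h2
      exact A.antisymm _ _ h2 h1
    have hqF : q ∉ A.final := by
      intro hqF
      obtain ⟨j, hj1, hj2, hj3⟩ := hF q hqF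
      obtain ⟨i, hiN, hiphi⟩ := phi_hits hk hj1 hj2 i₀
      have hm := hmem i
      rw [hconst i hiN, hconst (i + 1) (by omega), hiphi] at hm
      exact hj3 hm
    have hsub : {i : ℕ | p i ∈ A.final} ⊆ Set.Iio i₀ := by
      intro i hi
      by_contra hcon
      have hle : i₀ ≤ i := by simpa [Set.mem_Iio] using hcon
      exact hqF (by rw [← hconst i hle]; exact hi)
    exact (Set.finite_Iio i₀).subset hsub
  exact ⟨hrun', hacc, ⟨loopExt k n e, hrun', hacc⟩,
    ⟨loopExt k n s, loopExt k n e, hrun', hacc⟩⟩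
end

section
/- Let A = (Q, q₀, δ, F) be a (co-Büchi) linear weak alternating automaton and suppose σ = s₀s₁… ∈ L(A). Then there exist an accepting run dag Δ = e₀e₁… of A over σ with configurations c₀c₁… and indices k ≤ n such that c_k = c_{n+1} and for every q ∈ F there is some j with k ≤ j ≤ n and (q, q) ∉ e_j; in particular, the prefix e₀ … e_n is a finite run dag of A over s₀ … s_n satisfying the lasso conditions of the non-emptiness criterion. -/
/-- **Theorem 1, "only if" direction.** If `σ ∈ L(A)` for an LWAA `A`, then
there is an accepting run dag `Δ = e₀e₁…` of `A` over `σ` with configurations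
`c₀c₁…` and indices `k ≤ n` such that `c_k = c_{n+1}` and every `q ∈ F`
satisfies `(q,q) ∉ e_j` for some `k ≤ j ≤ n`; in particular the prefix
`e₀ … e_n` is a finite run dag of `A` over `s₀ … s_n` satisfying the lasso
conditions of the non-emptiness criterion. -/
theorem lwaa_mem_lang_lasso {V Q : Type} [Fintype V] [Fintype Q] (A : LWAA V Q)
    (σ : ℕ → Set V) (hσ : σ ∈ A.Lang) :
    ∃ e : ℕ → Set (Q × Q), A.IsRunDag σ e ∧ A.Accepting e ∧
      ∃ k n : ℕ, k ≤ n ∧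
        A.configs e k = A.configs e (n + 1) ∧
        (∀ q ∈ A.final, ∃ j : ℕ, k ≤ j ∧ j ≤ n ∧ (q, q) ∉ e j) ∧
        A.IsFinRunDag σ e n := by
  classical
  obtain ⟨e, hr, hacc⟩ := hσ
  refine ⟨e, hr, hacc, ?_⟩
  -- every location in a configuration is reachable by a finite path
  have pathTo : ∀ i, ∀ q ∈ A.configs e i,
      ∃ p : ℕ → Q, p 0 = A.init ∧ p i = q ∧ ∀ j, j < i → (p j, p (j+1)) ∈ e j := by
    intro i
    induction i with
    | zero =>
      intro q hq
      exact ⟨fun _ => A.init, rfl, (Set.mem_singleton_iff.mp hq).symm,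
        fun j hj => absurd hj (Nat.not_lt_zero j)⟩
    | succ i ih =>
      intro q hq
      obtain ⟨q', hq', he⟩ := hq
      obtain ⟨p, hp0, hpi, hpe⟩ := ih q' hq'
      refine ⟨fun j => if j ≤ i then p j else q, by simp [hp0], by simp, ?_⟩
      intro j hj
      rcases lt_or_eq_of_le (Nat.lt_succ_iff.mp hj) with h | h
      · show (if j ≤ i then p j else q, if j + 1 ≤ i then p (j + 1) else q) ∈ e j
        rw [if_pos (le_of_lt h), if_pos (by omega : j + 1 ≤ i)]
        exact hpe j h
      · subst h
        simp only [if_pos le_rfl, if_neg (Nat.not_succ_le_self j)]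
        exact hpi ▸ he
  -- for every final q and every m, some j ≥ m has no self-loop at q
  have hB : ∀ q ∈ A.final, ∀ m : ℕ, ∃ j, m ≤ j ∧ (q, q) ∉ e j := by
    intro q hqF m
    by_contra h
    push_neg at h
    have hall : ∀ j, m ≤ j → (q, q) ∈ e j := h
    have hqc : q ∈ A.configs e m := (hr m).1 (q, q) (hall m le_rfl)
    obtain ⟨p, hp0, hpm, hpe⟩ := pathTo m q hqc
    set p' : ℕ → Q := fun j => if j < m then p j else q with hp'
    have hpath : A.IsPath e p' := by
      constructor
      · by_cases h0 : 0 < m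
        · simpa [hp', h0] using hp0
        · have hm : m = 0 := Nat.eq_zero_of_not_pos h0
          subst hm
          simpa [hp'] using hpm ▸ hp0
      · intro i
        by_cases hi : i < m
        · have hpi1 : p' (i + 1) = p (i + 1) := by
            by_cases hi1 : i + 1 < m
            · simp [hp', hi1]
            · have : i + 1 = m := by omega
              simp [hp', this, hpm]
          have hpi0 : p' i = p i := if_pos hi
          rw [hpi0, hpi1]
          exact hpe i hi
        · have hi1 : ¬ (i + 1 < m) := by omega
          have h1 : p' i = q := if_neg hi
          have h2 : p' (i + 1) = q := if_neg hi1
          rw [h1, h2]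
          exact hall i (by omega)
    have hsub : Set.Ici m ⊆ {i : ℕ | p' i ∈ A.final} := by
      intro i hi
      have : ¬ i < m := by exact Nat.not_lt.mpr hi
      simp [hp', this, hqF]
    exact ((Set.Ici_infinite m).mono hsub) (hacc p' hpath)
  -- pigeonhole: some configuration recurs infinitely often
  have : ∃ C : Set Q, {i : ℕ | A.configs e i = C}.Infinite := by
    obtain ⟨C, hC⟩ := Finite.exists_infinite_fiber (A.configs e)
    exact ⟨C, Set.infinite_coe_iff.mp hC⟩
  obtain ⟨C, hC⟩ := this
  obtain ⟨k, hk⟩ := hC.nonempty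
  -- a bound on the indices witnessing hB at k, over all final states
  set g : Q → ℕ := fun q =>
    if h : q ∈ A.final then Classical.choose (hB q h k) else k with hg
  set M : ℕ := Finset.univ.sup g with hM
  obtain ⟨n', hn'C, hn'⟩ := hC.exists_gt (max M k)
  refine ⟨k, n' - 1, ?_, ?_, ?_, fun i _ => hr i⟩
  · omega
  · have : n' - 1 + 1 = n' := by omega
    rw [this, hk, hn'C]
  · intro q hq
    refine ⟨g q, ?_, ?_, ?_⟩
    · have := (Classical.choose_spec (hB q hq k)).1
      simpa [hg, hq] using this
    · have hle : g q ≤ M := Finset.le_sup (Finset.mem_univ q)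
      omega
    · have := (Classical.choose_spec (hB q hq k)).2
      simpa [hg, hq] using this
end

section
/- Let A = (Q, q₀, δ, F) be a simple (co-Büchi) linear weak alternating automaton. Then L(A) ≠ ∅ if and only if there exist a finite sequence s₀ … s_n of states (s_i ⊆ V), a finite run dag Δ = e₀ … e_n of A over s₀ … s_n with configurations c₀ … c_{n+1}, and some k ≤ n such that (1) c_k = c_{n+1}, and (2) for every q ∈ F there is some j with k ≤ j ≤ n and q ∉ c_j. -/
/-!
In a weak automaton every path of a run dag is eventually constant, so a run dag is accepting
iff no final location stays active on a self-loop from some instant on.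

Given a lasso-shaped finite run dag, repeating its loop `k … n` forever gives a run dag in which
every final location is infinitely often inactive, so none of them can loop forever.

Given an accepting run dag, fix a final location `q`. Whenever `q` is active and leaves, redirect
every edge `a → q` to the successors of `q`; simplicity says precisely that `a` may take these
transitions. Then `q` is inactive at the next instant, and since `q` cannot loop forever in the
accepting original, this happens infinitely often. The new run dag is still accepting and its
configurations are smaller, so bypassing every final location in turn gives an accepting run dag
in which all final locations are infinitely often inactive. Cutting it between two occurrences
of a configuration that recurs infinitely often, far enough apart to contain an absence of each
final location, yields the lasso.
-/

open Filter

namespace TransForm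

variable {V Q : Type} {s : Set V}

theorem sat_mono {X Y : Set Q} (hXY : X ⊆ Y) {f : TransForm V Q} (h : f.sat s X) :
    f.sat s Y := by
  induction f with
  | atom a => exact hXY h
  | and f g ihf ihg => exact ⟨ihf h.1, ihg h.2⟩
  | or f g ihf ihg => exact h.imp ihf ihg
  | _ => exact h

theorem sat_inter_occurs {X : Set Q} {f : TransForm V Q} (h : f.sat s X) :
    f.sat s {r | r ∈ X ∧ f.occurs r} := by
  induction f with
  | atom a => exact ⟨h, rfl⟩
  | and f g ihf ihg =>
    exact ⟨sat_mono (fun _ => And.imp_right Or.inl) (ihf h.1),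
      sat_mono (fun _ => And.imp_right Or.inr) (ihg h.2)⟩
  | or f g ihf ihg =>
    exact h.imp (fun hf => sat_mono (fun _ => And.imp_right Or.inl) (ihf hf))
      (fun hg => sat_mono (fun _ => And.imp_right Or.inr) (ihg hg))
  | _ => exact h

end TransForm

/-- The sequence `0, 1, …, n, k, k + 1, …, n, k, …` of positions visited along a lasso. -/
def lassoIndex (k n : ℕ) : ℕ → ℕ
  | 0 => 0
  | i + 1 => if lassoIndex k n i = n then k else lassoIndex k n i + 1

theorem lassoIndex_le {k n : ℕ} (hkn : k ≤ n) : ∀ i, lassoIndex k n i ≤ n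
  | 0 => Nat.zero_le n
  | i + 1 => by
    have := lassoIndex_le hkn i
    rw [lassoIndex]
    split_ifs <;> omega

theorem lassoIndex_add {k n i : ℕ} :
    ∀ {d : ℕ}, lassoIndex k n i + d ≤ n → lassoIndex k n (i + d) = lassoIndex k n i + d
  | 0, _ => rfl
  | d + 1, h => by
    rw [← Nat.add_assoc, lassoIndex, lassoIndex_add (by omega), if_neg (by omega),
      Nat.add_assoc]

theorem frequently_lassoIndex_eq {k n j : ℕ} (hkj : k ≤ j) (hjn : j ≤ n) :
    ∃ᶠ i in atTop, lassoIndex k n i = j := by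
  refine frequently_atTop.2 fun m => ?_
  have hm := lassoIndex_le (hkj.trans hjn) m
  have hn : lassoIndex k n (m + (n - lassoIndex k n m)) = n := by
    rw [lassoIndex_add] <;> omega
  have hk : lassoIndex k n (m + (n - lassoIndex k n m) + 1) = k := by
    rw [lassoIndex, hn, if_pos rfl]
  refine ⟨m + (n - lassoIndex k n m) + 1 + (j - k), by omega, ?_⟩
  rw [lassoIndex_add] <;> omega

namespace LWAA

variable {V Q : Type} (A : LWAA V Q)

theorem exists_eventually_eq_of_occurs [Finite Q] {p : ℕ → Q}
    (hp : ∀ i, (A.delta (p i)).occurs (p (i + 1))) : ∃ r, ∀ᶠ i in atTop, p i = r := by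
  have hreach (i j : ℕ) (hij : i ≤ j) :
      Relation.ReflTransGen (fun a b => (A.delta a).occurs b) (p i) (p j) := by
    induction j, hij using Nat.le_induction with
    | base => exact .refl
    | succ j _ ih => exact ih.tail (hp j)
  obtain ⟨r, hr⟩ := Finite.exists_infinite_fiber p
  have hr : (p ⁻¹' {r}).Infinite := Set.infinite_coe_iff.mp hr
  obtain ⟨i₀, hi₀ : p i₀ = r⟩ := hr.nonempty
  refine ⟨r, eventually_atTop.2 ⟨i₀, fun i hi => ?_⟩⟩
  obtain ⟨j, hj : p j = r, hij⟩ := hr.exists_gt i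
  exact A.antisymm _ _ (hj ▸ hreach i j hij.le) (hi₀ ▸ hreach i₀ i hi)

def trim (e : ℕ → Set (Q × Q)) (i : ℕ) : Set (Q × Q) :=
  {p | p ∈ e i ∧ p.1 ∈ A.configs e i}

open Classical in
def bypass (e : ℕ → Set (Q × Q)) (q : Q) (i : ℕ) : Set (Q × Q) :=
  if q ∈ A.configs e i ∧ (q, q) ∉ e i then
    {p | p ∈ e i ∧ p.2 ≠ q ∨
      (p.1, q) ∈ e i ∧ (q, p.2) ∈ e i ∧ (A.delta p.1).occurs p.2}
  else e i

variable {A} {σ : ℕ → Set V} {e : ℕ → Set (Q × Q)}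

theorem IsPath.mem_configs {p : ℕ → Q} (hp : A.IsPath e p) (i : ℕ) :
    p i ∈ A.configs e i := by
  induction i with
  | zero => exact hp.1
  | succ i ih => exact ⟨p i, ih, hp.2 i⟩

theorem exists_isPath_of_mem_configs {i₀ : ℕ} {f : ℕ → Q} (hf₀ : f 0 ∈ A.configs e i₀)
    (hf : ∀ j, (f j, f (j + 1)) ∈ e (i₀ + j)) :
    ∃ p, A.IsPath e p ∧ ∀ j, p (i₀ + j) = f j := by
  induction i₀ generalizing f with
  | zero => exact ⟨f, ⟨hf₀, fun j => by simpa using hf j⟩, fun j => by simp⟩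
  | succ i₀ ih =>
    obtain ⟨b, hb, hbf⟩ := hf₀
    obtain ⟨p, hp, hpf⟩ := ih (f := fun | 0 => b | j + 1 => f j) hb fun
      | 0 => hbf
      | j + 1 => by simpa [Nat.add_right_comm, Nat.add_assoc] using hf j
    exact ⟨p, hp, fun j => by simpa [Nat.add_right_comm, Nat.add_assoc] using hpf (j + 1)⟩

theorem mem_configs_of_self_loops {r : Q} {i₀ : ℕ} (hr : r ∈ A.configs e i₀)
    (hloop : ∀ i ≥ i₀, (r, r) ∈ e i) : ∀ i ≥ i₀, r ∈ A.configs e i := by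
  intro i hi
  induction i, hi using Nat.le_induction with
  | base => exact hr
  | succ i hi ih => exact ⟨r, ih, hloop i hi⟩

theorem Accepting.exists_ge_not_self_loop (hacc : A.Accepting e) {r : Q} (hrF : r ∈ A.final)
    {i₀ : ℕ} (hr : r ∈ A.configs e i₀) : ∃ i ≥ i₀, (r, r) ∉ e i := by
  by_contra! hloop
  obtain ⟨p, hp, hpr⟩ := exists_isPath_of_mem_configs (f := fun _ => r) hr
    fun j => hloop _ (Nat.le_add_right _ _)
  refine Set.infinite_of_forall_exists_gt (fun m => ⟨i₀ + m + 1, ?_, by omega⟩) (hacc p hp)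
  simpa [Nat.add_assoc, hpr] using hrF

theorem accepting_of_exists_ge_not_self_loop [Finite Q]
    (hocc : ∀ i, ∀ p ∈ e i, (A.delta p.1).occurs p.2)
    (h : ∀ r ∈ A.final, ∀ i₀, r ∈ A.configs e i₀ → ∃ i ≥ i₀, (r, r) ∉ e i) :
    A.Accepting e := by
  intro p hp
  obtain ⟨r, hr⟩ := A.exists_eventually_eq_of_occurs fun i => hocc i _ (hp.2 i)
  obtain ⟨i₀, hi₀⟩ := eventually_atTop.1 hr
  by_cases hrF : r ∈ A.final
  · obtain ⟨i, hi, hnot⟩ := h r hrF i₀ (hi₀ i₀ le_rfl ▸ hp.mem_configs i₀)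
    have hstep := hp.2 i
    rw [hi₀ i hi, hi₀ (i + 1) (by omega)] at hstep
    exact (hnot hstep).elim
  · refine (Set.finite_lt_nat i₀).subset fun i hi => ?_
    by_contra! hle
    exact hrF (hi₀ i (not_lt.1 hle) ▸ hi)

theorem configs_trim : A.configs (A.trim e) = A.configs e := by
  funext i
  induction i with
  | zero => rfl
  | succ i ih =>
    ext r
    change (∃ a ∈ A.configs (A.trim e) i, _) ↔ ∃ a ∈ A.configs e i, _
    rw [ih]
    exact exists_congr fun a => ⟨fun h => ⟨h.1, h.2.1⟩, fun h => ⟨h.1, h.2, h.1⟩⟩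

theorem isRunDag_trim
    (hocc : ∀ i, ∀ p ∈ e i, p.1 ∈ A.configs e i → (A.delta p.1).occurs p.2)
    (hsat : ∀ i, ∀ q ∈ A.configs e i, (A.delta q).sat (σ i) {r | (q, r) ∈ e i}) :
    A.IsRunDag σ (A.trim e) := by
  intro i
  rw [configs_trim]
  refine ⟨fun p hp => hp.2, fun p hp => hocc i p hp.1 hp.2, fun q hq => ?_⟩
  convert hsat i q hq using 3 with r
  exact and_iff_left hq

variable {q : Q}

theorem configs_bypass_subset (e : ℕ → Set (Q × Q)) (q : Q) (i : ℕ) :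
    A.configs (A.bypass e q) i ⊆ A.configs e i := by
  induction i with
  | zero => exact le_rfl
  | succ i ih =>
    rintro r ⟨a, ha, hr⟩
    unfold bypass at hr
    split_ifs at hr with hq
    · rcases hr with hr | hr
      · exact ⟨a, ih ha, hr.1⟩
      · exact ⟨q, hq.1, hr.2.1⟩
    · exact ⟨a, ih ha, hr⟩

theorem notMem_configs_bypass_succ {i : ℕ} (hq : q ∈ A.configs e i) (hqq : (q, q) ∉ e i) :
    q ∉ A.configs (A.bypass e q) (i + 1) := by
  rintro ⟨a, -, ha⟩
  rw [bypass, if_pos ⟨hq, hqq⟩] at ha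
  rcases ha with ha | ha
  · exact ha.2 rfl
  · exact hqq ha.2.1

theorem occurs_of_mem_bypass {i : ℕ} (hocc : ∀ p ∈ e i, (A.delta p.1).occurs p.2) {p : Q × Q}
    (hp : p ∈ A.bypass e q i) : (A.delta p.1).occurs p.2 := by
  unfold bypass at hp
  split_ifs at hp
  · exact hp.elim (fun hp => hocc p hp.1) fun hp => hp.2.2
  · exact hocc p hp

theorem self_loop_mem_of_mem_bypass {i : ℕ} (hocc : ∀ p ∈ e i, (A.delta p.1).occurs p.2)
    {r : Q} (hr : (r, r) ∈ A.bypass e q i) : (r, r) ∈ e i := by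
  unfold bypass at hr
  split_ifs at hr with hq
  · rcases hr with hr | ⟨hrq, hqr, -⟩
    · exact hr.1
    · have : r = q := A.antisymm r q (.single (hocc _ hrq)) (.single (hocc _ hqr))
      exact absurd (this ▸ hqr) hq.2
  · exact hr

theorem sat_bypass (hsimple : A.Simple) (hqF : q ∈ A.final) (hrun : A.IsRunDag σ e) {i : ℕ}
    {a : Q} (ha : a ∈ A.configs e i) :
    (A.delta a).sat (σ i) {r | (a, r) ∈ A.bypass e q i} := by
  have hsat := (hrun i).2.2
  unfold bypass
  split_ifs with hq
  · by_cases haq : (a, q) ∈ e i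
    · have hX : (A.delta a).sat (σ i) ({r | (a, r) ∈ e i ∧ r ≠ q} ∪ {q}) :=
        TransForm.sat_mono (fun r hr => (em (r = q)).elim Or.inr fun h => Or.inl ⟨hr, h⟩)
          (hsat a ha)
      have hXY := hsimple q hqF a (σ i) _ {r | (q, r) ∈ e i} (fun h => h.2 rfl) hq.2 hX
        (hsat q hq.1)
      refine TransForm.sat_mono ?_ (TransForm.sat_inter_occurs hXY)
      rintro r ⟨hr | hr, hocc⟩
      · exact Or.inl hr
      · exact Or.inr ⟨haq, hr, hocc⟩
    · refine TransForm.sat_mono (fun r hr => Or.inl ⟨hr, ?_⟩) (hsat a ha)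
      rintro rfl
      exact haq hr
  · exact hsat a ha

theorem IsRunDag.trim_bypass (hsimple : A.Simple) (hrun : A.IsRunDag σ e) (hqF : q ∈ A.final) :
    A.IsRunDag σ (A.trim (A.bypass e q)) :=
  isRunDag_trim (fun i _ hp _ => occurs_of_mem_bypass (hrun i).2.1 hp)
    fun i _ ha => sat_bypass hsimple hqF hrun (configs_bypass_subset e q i ha)

theorem Accepting.trim_bypass [Finite Q] (hrun : A.IsRunDag σ e) (hacc : A.Accepting e)
    (q : Q) : A.Accepting (A.trim (A.bypass e q)) := by
  refine accepting_of_exists_ge_not_self_loop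
    (fun i p hp => occurs_of_mem_bypass (hrun i).2.1 hp.1) fun r hrF i₀ hr => ?_
  rw [configs_trim] at hr
  obtain ⟨i, hi, hrr⟩ := hacc.exists_ge_not_self_loop hrF (configs_bypass_subset e q i₀ hr)
  exact ⟨i, hi, fun h => hrr (self_loop_mem_of_mem_bypass (hrun i).2.1 h.1)⟩

theorem Accepting.frequently_notMem_configs_bypass (hacc : A.Accepting e) (hqF : q ∈ A.final) :
    ∃ᶠ i in atTop, q ∉ A.configs (A.bypass e q) i := by
  refine frequently_atTop.2 fun m => ?_
  by_contra! hq
  obtain ⟨i, hi, hqq⟩ :=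
    hacc.exists_ge_not_self_loop hqF (configs_bypass_subset e q m (hq m le_rfl))
  exact notMem_configs_bypass_succ (configs_bypass_subset e q i (hq i hi)) hqq
    (hq (i + 1) (by omega))

theorem exists_isRunDag_accepting_frequently_notMem [Finite Q] (hsimple : A.Simple)
    (hrun : A.IsRunDag σ e) (hacc : A.Accepting e) :
    ∃ e', A.IsRunDag σ e' ∧ A.Accepting e' ∧
      ∀ q ∈ A.final, ∃ᶠ i in atTop, q ∉ A.configs e' i := by
  refine A.final.toFinite.induction_on_subset _ ⟨e, hrun, hacc, by simp⟩ ?_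
  rintro q S hqF - - ⟨e₁, hrun₁, hacc₁, habs₁⟩
  refine ⟨_, hrun₁.trim_bypass hsimple hqF, hacc₁.trim_bypass hrun₁ q, ?_⟩
  simp only [Set.mem_insert_iff, forall_eq_or_imp, configs_trim]
  exact ⟨hacc₁.frequently_notMem_configs_bypass hqF, fun q' hq' =>
    (habs₁ q' hq').mono fun i h h' => h (configs_bypass_subset e₁ q i h')⟩

theorem IsRunDag.exists_lasso [Finite Q] (hrun : A.IsRunDag σ e)
    (habs : ∀ q ∈ A.final, ∃ᶠ i in atTop, q ∉ A.configs e i) :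
    ∃ n k, A.IsFinRunDag σ e n ∧ k ≤ n ∧ A.configs e k = A.configs e (n + 1) ∧
      ∀ q ∈ A.final, ∃ j, k ≤ j ∧ j ≤ n ∧ q ∉ A.configs e j := by
  obtain ⟨C, hC⟩ := Finite.exists_infinite_fiber (A.configs e)
  have hC : (A.configs e ⁻¹' {C}).Infinite := Set.infinite_coe_iff.mp hC
  obtain ⟨k, hk : A.configs e k = C⟩ := hC.nonempty
  choose! J hJk hJ using fun q hq => frequently_atTop.1 (habs q hq) k
  obtain ⟨M, hM⟩ := (Set.finite_range J).bddAbove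
  obtain ⟨m, hm : A.configs e m = C, hMm⟩ := hC.exists_gt (max k M)
  refine ⟨m - 1, k, fun i _ => hrun i, by omega, ?_,
    fun q hq => ⟨J q, hJk q hq, ?_, hJ q hq⟩⟩
  · rw [Nat.sub_add_cancel (by omega), hk, hm]
  · have := hM ⟨q, rfl⟩
    omega

theorem configs_comp_lassoIndex {k n : ℕ} (hloop : A.configs e k = A.configs e (n + 1))
    (i : ℕ) : A.configs (e ∘ lassoIndex k n) i = A.configs e (lassoIndex k n i) := by
  induction i with
  | zero => rfl
  | succ i ih =>
    have hstep :
        A.configs (e ∘ lassoIndex k n) (i + 1) = A.configs e (lassoIndex k n i + 1) := by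
      ext r
      change (∃ a ∈ A.configs (e ∘ lassoIndex k n) i, _) ↔
        ∃ a ∈ A.configs e (lassoIndex k n i), _
      rw [ih]
      rfl
    rw [hstep, lassoIndex]
    split_ifs with h
    · rw [h, hloop]
    · rfl

theorem comp_lassoIndex_mem_lang [Finite Q] {s : ℕ → Set V} {n k : ℕ}
    (hfin : A.IsFinRunDag s e n) (hkn : k ≤ n) (hloop : A.configs e k = A.configs e (n + 1))
    (habs : ∀ q ∈ A.final, ∃ j, k ≤ j ∧ j ≤ n ∧ q ∉ A.configs e j) :
    s ∘ lassoIndex k n ∈ A.Lang := by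
  have hconf := configs_comp_lassoIndex hloop
  have hstep i := hfin _ (lassoIndex_le hkn i)
  refine ⟨e ∘ lassoIndex k n,
    fun i => by simpa only [hconf, Function.comp_apply] using hstep i,
    accepting_of_exists_ge_not_self_loop (fun i => (hstep i).2.1) fun r hrF i₀ hr => ?_⟩
  by_contra! hrr
  obtain ⟨j, hkj, hjn, hrj⟩ := habs r hrF
  obtain ⟨i, hi, hij⟩ := frequently_atTop.1 (frequently_lassoIndex_eq hkj hjn) i₀
  have hri := mem_configs_of_self_loops hr hrr i hi
  rw [hconf, hij] at hri
  exact hrj hri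

end LWAA

theorem simple_lwaa_lang_nonempty_iff_general {V Q : Type} [Fintype Q]
    (A : LWAA V Q) (hsimple : A.Simple) :
    A.Lang.Nonempty ↔
      ∃ (n : ℕ) (s : ℕ → Set V) (e : ℕ → Set (Q × Q)) (k : ℕ),
        A.IsFinRunDag s e n ∧ k ≤ n ∧
        A.configs e k = A.configs e (n + 1) ∧
        (∀ q ∈ A.final, ∃ j : ℕ, k ≤ j ∧ j ≤ n ∧ q ∉ A.configs e j) := by
  constructor
  · rintro ⟨σ, e, hrun, hacc⟩
    obtain ⟨e', hrun', -, habs⟩ :=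
      LWAA.exists_isRunDag_accepting_frequently_notMem hsimple hrun hacc
    obtain ⟨n, k, hlasso⟩ := hrun'.exists_lasso habs
    exact ⟨n, σ, e', k, hlasso⟩
  · rintro ⟨n, s, e, k, hfin, hkn, hloop, habs⟩
    exact ⟨_, LWAA.comp_lassoIndex_mem_lang hfin hkn hloop habs⟩

/-- **Theorem 2 (non-emptiness criterion for simple LWAA).** For a simple LWAA
`A`, `L(A) ≠ ∅` iff there are a finite sequence of states `s₀ … s_n`, a finite
run dag `e₀ … e_n` of `A` over it with configurations `c₀ … c_{n+1}`, and some
`k ≤ n` such that (1) `c_k = c_{n+1}` and (2) for every `q ∈ F` there is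
`k ≤ j ≤ n` with `q ∉ c_j`. -/
theorem simple_lwaa_lang_nonempty_iff {V Q : Type} [Fintype V] [Fintype Q]
    (A : LWAA V Q) (hsimple : A.Simple) :
    A.Lang.Nonempty ↔
      ∃ (n : ℕ) (s : ℕ → Set V) (e : ℕ → Set (Q × Q)) (k : ℕ),
        A.IsFinRunDag s e n ∧ k ≤ n ∧
        A.configs e k = A.configs e (n + 1) ∧
        (∀ q ∈ A.final, ∃ j : ℕ, k ≤ j ∧ j ≤ n ∧ q ∉ A.configs e j) :=
  simple_lwaa_lang_nonempty_iff_general A hsimple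
end

section
/- For any LTL formula φ in negation normal form that does not contain any subformula of the form X(χ U χ'), the automaton A_φ is a simple LWAA: for all q ∈ F, q' ∈ Q, s ⊆ V, and X, Y ⊆ Q with q ∉ X and q ∉ Y, if (s, X ∪ {q}) satisfies δ(q') and (s, Y) satisfies δ(q), then (s, X ∪ Y) satisfies δ(q'). -/
/-- LTL formulas over `V` in negation normal form: literals `v` / `¬v`,
conjunction, disjunction, and the temporal operators X (next), U (until)
and V (release). -/
inductive LTL (V : Type) : Type where
  | pos : V → LTL V
  | neg : V → LTL V
  | and : LTL V → LTL V → LTL V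
  | or : LTL V → LTL V → LTL V
  | next : LTL V → LTL V
  | untl : LTL V → LTL V → LTL V
  | release : LTL V → LTL V → LTL V

namespace LTL

variable {V : Type}

/-- The set of subformulas of an LTL formula (including the formula itself). -/
def subf : LTL V → Set (LTL V)
  | pos v => {pos v}
  | neg v => {neg v}
  | and φ ψ => insert (and φ ψ) (φ.subf ∪ ψ.subf)
  | or φ ψ => insert (or φ ψ) (φ.subf ∪ ψ.subf)
  | next φ => insert (next φ) φ.subf
  | untl φ ψ => insert (untl φ ψ) (φ.subf ∪ ψ.subf)
  | release φ ψ => insert (release φ ψ) (φ.subf ∪ ψ.subf)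

/-- The transition formula `δ(q_ψ)` of the LWAA `A_φ` associated with the
subformula `ψ`; locations of `A_φ` are identified with subformulas. -/
def delta : LTL V → TransForm V (LTL V)
  | pos v => .pos v
  | neg v => .neg v
  | and φ ψ => .and φ.delta ψ.delta
  | or φ ψ => .or φ.delta ψ.delta
  | next φ => .atom φ
  | untl φ ψ => .or ψ.delta (.and φ.delta (.atom (untl φ ψ)))
  | release φ ψ => .and ψ.delta (.or φ.delta (.atom (release φ ψ)))

/-- `ψ.IsUntil` holds iff `ψ` is an "until" formula; the co-final set of `A_φ`
consists of the locations `q_{ψ U χ}` for "until" subformulas of `φ`. -/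
def IsUntil : LTL V → Prop
  | untl _ _ => True
  | _ => False

end LTL

lemma TransForm.sat_mono_s5 {V Q : Type} {s : Set V} {X X' : Set Q} (h : X ⊆ X') :
    ∀ f : TransForm V Q, f.sat s X → f.sat s X'
  | .tt, _ => trivial
  | .ff, hf => hf.elim
  | .pos v, hv => hv
  | .neg v, hv => hv
  | .atom q, hq => h hq
  | .and f g, ⟨hf, hg⟩ => ⟨sat_mono_s5 h f hf, sat_mono_s5 h g hg⟩
  | .or f g, hfg => hfg.elim (fun hf => Or.inl (sat_mono_s5 h f hf))
      (fun hg => Or.inr (sat_mono_s5 h g hg))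

lemma LTL.mem_subf_self {V : Type} : ∀ ψ : LTL V, ψ ∈ ψ.subf
  | .pos v => rfl
  | .neg v => rfl
  | .and _ _ => Or.inl rfl
  | .or _ _ => Or.inl rfl
  | .next _ => Or.inl rfl
  | .untl _ _ => Or.inl rfl
  | .release _ _ => Or.inl rfl

lemma LTL.subf_subset {V : Type} : ∀ φ ψ : LTL V, ψ ∈ φ.subf → ψ.subf ⊆ φ.subf := by
  intro φ
  induction φ with
  | pos v => intro ψ h; cases h; exact fun _ h => h
  | neg v => intro ψ h; cases h; exact fun _ h => h
  | and a b iha ihb =>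
    rintro ψ (rfl | h | h)
    · exact fun _ h => h
    · exact fun x hx => Or.inr (Or.inl (iha ψ h hx))
    · exact fun x hx => Or.inr (Or.inr (ihb ψ h hx))
  | or a b iha ihb =>
    rintro ψ (rfl | h | h)
    · exact fun _ h => h
    · exact fun x hx => Or.inr (Or.inl (iha ψ h hx))
    · exact fun x hx => Or.inr (Or.inr (ihb ψ h hx))
  | next a iha =>
    rintro ψ (rfl | h)
    · exact fun _ h => h
    · exact fun x hx => Or.inr (iha ψ h hx)
  | untl a b iha ihb =>
    rintro ψ (rfl | h | h)
    · exact fun _ h => h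
    · exact fun x hx => Or.inr (Or.inl (iha ψ h hx))
    · exact fun x hx => Or.inr (Or.inr (ihb ψ h hx))
  | release a b iha ihb =>
    rintro ψ (rfl | h | h)
    · exact fun _ h => h
    · exact fun x hx => Or.inr (Or.inl (iha ψ h hx))
    · exact fun x hx => Or.inr (Or.inr (ihb ψ h hx))

/-- **Theorem 3.** For any LTL formula `φ` (in negation normal form) containing
no subformula of the form `X(χ U χ')`, the automaton `A_φ` is a simple LWAA:
for every co-final location `q` (an "until" subformula of `φ`), every location
`q'` (a subformula of `φ`), every state `s ⊆ V` and all `X, Y ⊆ Q` not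
containing `q`, if `(s, X ∪ {q})` satisfies `δ(q')` and `(s, Y)` satisfies
`δ(q)`, then `(s, X ∪ Y)` satisfies `δ(q')`. -/
theorem ltl_lwaa_simple {V : Type} [Fintype V] (φ : LTL V)
    (hXU : ∀ χ χ' : LTL V, LTL.next (LTL.untl χ χ') ∉ φ.subf) :
    ∀ q ∈ φ.subf, q.IsUntil →
      ∀ q' ∈ φ.subf, ∀ s : Set V, ∀ X Y : Set (LTL V),
        X ⊆ φ.subf → Y ⊆ φ.subf → q ∉ X → q ∉ Y →
        q'.delta.sat s (X ∪ {q}) → q.delta.sat s Y →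
        q'.delta.sat s (X ∪ Y) := by
  rintro q hq hqU q' hq' s X Y hX hY hqX hqY hsat hsatY
  obtain ⟨a0, b0, rfl⟩ : ∃ a b, q = LTL.untl a b := by
    cases q <;> simp [LTL.IsUntil] at hqU <;> exact ⟨_, _, rfl⟩
  clear hqU
  induction q' with
  | pos v => exact hsat
  | neg v => exact hsat
  | and a b iha ihb =>
    have ha := LTL.subf_subset φ _ hq' (Or.inr (Or.inl (LTL.mem_subf_self a)))
    have hb := LTL.subf_subset φ _ hq' (Or.inr (Or.inr (LTL.mem_subf_self b)))
    exact ⟨iha ha hsat.1, ihb hb hsat.2⟩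
  | or a b iha ihb =>
    have ha := LTL.subf_subset φ _ hq' (Or.inr (Or.inl (LTL.mem_subf_self a)))
    have hb := LTL.subf_subset φ _ hq' (Or.inr (Or.inr (LTL.mem_subf_self b)))
    exact hsat.elim (fun h => Or.inl (iha ha h)) (fun h => Or.inr (ihb hb h))
  | next a _ =>
    rcases hsat with h | h
    · exact Or.inl h
    · exfalso
      simp only [Set.mem_singleton_iff] at h
      subst h
      exact hXU a0 b0 hq'
  | untl a b iha ihb =>
    have ha := LTL.subf_subset φ _ hq' (Or.inr (Or.inl (LTL.mem_subf_self a)))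
    have hb := LTL.subf_subset φ _ hq' (Or.inr (Or.inr (LTL.mem_subf_self b)))
    rcases hsat with h | ⟨h1, h2⟩
    · exact Or.inl (ihb hb h)
    · rcases h2 with h2 | h2
      · exact Or.inr ⟨iha ha h1, Or.inl h2⟩
      · simp only [Set.mem_singleton_iff] at h2
        injection h2 with h2a h2b
        subst h2a; subst h2b
        rcases hsatY with hY1 | ⟨_, hY2⟩
        · exact Or.inl (TransForm.sat_mono_s5 (Set.subset_union_right) _ hY1)
        · exact absurd hY2 hqY
  | release a b iha ihb =>
    have ha := LTL.subf_subset φ _ hq' (Or.inr (Or.inl (LTL.mem_subf_self a)))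
    have hb := LTL.subf_subset φ _ hq' (Or.inr (Or.inr (LTL.mem_subf_self b)))
    obtain ⟨h1, h2⟩ := hsat
    refine ⟨ihb hb h1, ?_⟩
    rcases h2 with h2 | h2
    · exact Or.inl (iha ha h2)
    · rcases h2 with h2 | h2
      · exact Or.inr (Set.mem_union_left _ h2)
      · simp at h2
end
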